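/- (Curvature of a connection relative to the Levi-Civita curvature.) Let L be a connection on Ω with torsion T and lowered curvature R, and let g be a metric on Ω with non-metricity Q. Define Γ^p_{ij} := (1/2) g^{pn}(∂_j g_{ni} + ∂_i g_{nj} − ∂_n g_{ij}), its curvature K_{jiq}^p := ∂_j Γ^p_{iq} − ∂_i Γ^p_{jq} + Γ^h_{iq} Γ^p_{jh} − Γ^h_{jq} Γ^p_{ih}, and K_{ijpl} := g_{lm} K_{ijp}^m. Define T_{ijp} := T_{ij}^k g_{kp}, C_{ij}^p := g^{pk}(−T_{ikj} + T_{kji} − T_{jik}), M_{ij}^p := (1/2) g^{pk}(Q_{ikj} − Q_{kji} + Q_{jik}), W_{ij}^p := C_{ij}^p + M_{ij}^p, and W_{ijp} := W_{ij}^k g_{kp}. Let ∂̂ denote the covariant derivative with respect to Γ, so ∂̂_i W_{jpl} := ∂_i W_{jpl} − Γ^m_{ij} W_{mpl} − Γ^m_{ip} W_{jml} − Γ^m_{il} W_{jpm}. Then for all indices i,j,p,l and all points of Ω, R_{ijpl} = K_{ijpl} + (∂̂_i W_{jpl} − ∂̂_j W_{ipl}) + (W_{iml} W_{jp}^m − W_{jml}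 W_{ip}^m). -/

import Mathlib

noncomputable section

/-- Points of ℝ³. -/
abbrev E3 := Fin 3 → ℝ

/-- Partial derivative of `f` along the `j`-th coordinate at `x`. -/
def pd (f : E3 → ℝ) (j : Fin 3) (x : E3) : ℝ :=
  fderiv ℝ f x (Pi.single j 1)

/-- A connection coefficient field: `L x i j k = L^i_{jk}(x)`. -/
abbrev Conn := E3 → Fin 3 → Fin 3 → Fin 3 → ℝ

/-- Smoothness of a connection on `Ω`. -/
def ConnSmooth (L : Conn) (Ω : Set E3) : Prop :=
  ∀ i j k, ContDiffOn ℝ (⊤ : ℕ∞) (fun x => L x i j k) Ω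

/-- Torsion of a connection: `torsion L x i j k = T_{jk}^i = (1/2)(L^i_{jk} - L^i_{kj})`. -/
def torsion (L : Conn) (x : E3) (i j k : Fin 3) : ℝ :=
  (L x i j k - L x i k j) / 2

/-- Curvature of a connection: `curv L x p j i q = R_{jiq}^p`. -/
def curv (L : Conn) (x : E3) (p j i q : Fin 3) : ℝ :=
  pd (fun y => L y p i q) j x - pd (fun y => L y p j q) i x
    + ∑ h, (L x h i q * L x p j h - L x h j q * L x p i h)

/-- A metric field. -/
abbrev Metric := E3 → Matrix (Fin 3) (Fin 3) ℝ

/-- `g` is a metric on `Ω`: smooth entries, symmetric and positive definite on `Ω`. -/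
def MetricOn (g : Metric) (Ω : Set E3) : Prop :=
  (∀ i j, ContDiffOn ℝ (⊤ : ℕ∞) (fun x => g x i j) Ω) ∧
  (∀ x ∈ Ω, (g x).IsSymm) ∧ (∀ x ∈ Ω, (g x).PosDef)

/-- Non-metricity of `(L, g)`: `nm L g x k i j = Q_{kij}`. -/
def nm (L : Conn) (g : Metric) (x : E3) (k i j : Fin 3) : ℝ :=
  - pd (fun y => g y i j) k x + ∑ p, (L x p k j * g x i p + L x p k i * g x j p)

/-- Lowered curvature: `lcurv L g x i j k l = R_{ijkl} = g_{lp} R_{ijk}^p`. -/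
def lcurv (L : Conn) (g : Metric) (x : E3) (i j k l : Fin 3) : ℝ :=
  ∑ p, g x l p * curv L x p i j k

/-- Levi-Civita coefficients of `g`:
`Gamma g x p i j = Γ^p_{ij} = (1/2) g^{pn}(∂_j g_{ni} + ∂_i g_{nj} - ∂_n g_{ij})`. -/
def Gamma (g : Metric) (x : E3) (p i j : Fin 3) : ℝ :=
  (1 / 2) * ∑ n, (g x)⁻¹ p n *
    (pd (fun y => g y n i) j x + pd (fun y => g y n j) i x - pd (fun y => g y i j) n x)

/-- Lowered torsion `Tlow L g x i j p = T_{ijp} = T_{ij}^k g_{kp}`. -/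
def Tlow (L : Conn) (g : Metric) (x : E3) (i j p : Fin 3) : ℝ :=
  ∑ k, torsion L x k i j * g x k p

/-- Contortion `contortion L g x p i j = C_{ij}^p = g^{pk}(-T_{ikj} + T_{kji} - T_{jik})`. -/
def contortion (L : Conn) (g : Metric) (x : E3) (p i j : Fin 3) : ℝ :=
  ∑ k, (g x)⁻¹ p k *
    (-(Tlow L g x i k j) + Tlow L g x k j i - Tlow L g x j i k)

/-- Non-metricity part
`mten L g x p i j = M_{ij}^p = (1/2) g^{pk}(Q_{ikj} - Q_{kji} + Q_{jik})`. -/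
def mten (L : Conn) (g : Metric) (x : E3) (p i j : Fin 3) : ℝ :=
  (1 / 2) * ∑ k, (g x)⁻¹ p k *
    (nm L g x i k j - nm L g x k j i + nm L g x j i k)

/-- The Levi-Civita connection of `g` as a connection field. -/
def LC (g : Metric) : Conn := fun x p i j => Gamma g x p i j

/-- `Wup L g x p i j = W_{ij}^p = C_{ij}^p + M_{ij}^p`. -/
def Wup (L : Conn) (g : Metric) (x : E3) (p i j : Fin 3) : ℝ :=
  contortion L g x p i j + mten L g x p i j

/-- `Wlow L g x i j p = W_{ijp} = W_{ij}^k g_{kp}`. -/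
def Wlow (L : Conn) (g : Metric) (x : E3) (i j p : Fin 3) : ℝ :=
  ∑ k, Wup L g x k i j * g x k p

/-- Covariant derivative of `W` with respect to the Levi-Civita connection:
`hatD L g i j p l x = ∂̂_i W_{jpl}`. -/
def hatD (L : Conn) (g : Metric) (i j p l : Fin 3) (x : E3) : ℝ :=
  pd (fun y => Wlow L g y j p l) i x
    - ∑ m, (Gamma g x m i j * Wlow L g x m p l + Gamma g x m i p * Wlow L g x j m l
            + Gamma g x m i l * Wlow L g x j p m)

/-!
The non-metricity and torsion combine so that `W = C + M` is exactly the difference tensor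
`L - Γ` between the connection and the Levi-Civita connection. Writing `L = Γ + W`, the
curvature of `L` is that of `Γ` plus the antisymmetrised `Γ`-covariant derivative of `W` plus
the quadratic term in `W`; the terms `Γ^k_{ij} - Γ^k_{ji}` drop out because `Γ` is torsion-free.
Finally, lowering an index with `g` commutes with `∂̂` because `Γ` is metric.
-/

open Filter Topology Matrix
open scoped ContDiff

section MatrixSmooth

variable {ι E : Type*} [Fintype ι] [DecidableEq ι] [NormedAddCommGroup E] [NormedSpace ℝ E]
  {M : E → Matrix ι ι ℝ} {x : E} {k : WithTop ℕ∞}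

theorem ContDiffAt.matrix_det (hM : ∀ a b, ContDiffAt ℝ k (fun y => M y a b) x) :
    ContDiffAt ℝ k (fun y => (M y).det) x := by
  simp only [Matrix.det_apply']
  exact ContDiffAt.sum fun σ _ => contDiffAt_const.mul (contDiffAt_prod fun a _ => hM (σ a) a)

theorem ContDiffAt.matrix_inv_apply (hM : ∀ a b, ContDiffAt ℝ k (fun y => M y a b) x)
    (hdet : (M x).det ≠ 0) (a b : ι) :
    ContDiffAt ℝ k (fun y => (M y)⁻¹ a b) x := by
  simp only [Matrix.inv_def, Matrix.smul_apply, Matrix.adjugate_apply, Ring.inverse_eq_inv,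
    smul_eq_mul]
  refine ((ContDiffAt.matrix_det hM).inv hdet).mul (ContDiffAt.matrix_det fun c d => ?_)
  simp only [Matrix.updateRow_apply]
  split_ifs
  exacts [contDiffAt_const, hM c d]

end MatrixSmooth

theorem ContDiffAt.pd {f : E3 → ℝ} {x : E3} (hf : ContDiffAt ℝ ∞ f x) (j : Fin 3) :
    ContDiffAt ℝ ∞ (pd f j) x :=
  (hf.fderiv_right (m := ∞) le_rfl).clm_apply contDiffAt_const

section PartialDerivative

variable {f h : E3 → ℝ} {x : E3}

theorem pd_congr {f' : E3 → ℝ} (hf : f =ᶠ[𝓝 x] f') (j : Fin 3) : pd f j x = pd f' j x := by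
  simp only [pd, hf.fderiv_eq]

theorem pd_add (hf : DifferentiableAt ℝ f x) (hh : DifferentiableAt ℝ h x) (j : Fin 3) :
    pd (fun y => f y + h y) j x = pd f j x + pd h j x := by
  simp [pd, fderiv_fun_add hf hh]

theorem pd_sub (hf : DifferentiableAt ℝ f x) (hh : DifferentiableAt ℝ h x) (j : Fin 3) :
    pd (fun y => f y - h y) j x = pd f j x - pd h j x := by
  simp [pd, fderiv_fun_sub hf hh]

theorem pd_mul (hf : DifferentiableAt ℝ f x) (hh : DifferentiableAt ℝ h x) (j : Fin 3) :
    pd (fun y => f y * h y) j x = pd f j x * h x + f x * pd h j x := by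
  simp [pd, fderiv_fun_mul hf hh, add_comm, mul_comm]

theorem pd_sum {ι : Type*} {s : Finset ι} {F : ι → E3 → ℝ}
    (hF : ∀ k ∈ s, DifferentiableAt ℝ (F k) x) (j : Fin 3) :
    pd (fun y => ∑ k ∈ s, F k y) j x = ∑ k ∈ s, pd (F k) j x := by
  simp [pd, fderiv_fun_sum hF]

end PartialDerivative

namespace MetricOn

variable {Ω : Set E3} {g : Metric} {L : Conn} {y : E3}

theorem symm_apply (hg : MetricOn g Ω) (hy : y ∈ Ω) (a b : Fin 3) : g y a b = g y b a :=
  (hg.2.1 y hy).apply b a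

theorem isUnit_det (hg : MetricOn g Ω) (hy : y ∈ Ω) : IsUnit (g y).det :=
  isUnit_iff_ne_zero.2 (hg.2.2 y hy).det_pos.ne'

theorem inv_mulVec_vecMul (hg : MetricOn g Ω) (hy : y ∈ Ω) (A : Fin 3 → ℝ) :
    (g y)⁻¹ *ᵥ (A ᵥ* g y) = A := by
  have hA : A ᵥ* g y = g y *ᵥ A := by
    rw [← Matrix.vecMul_transpose, (hg.2.1 y hy).eq]
  rw [hA, Matrix.mulVec_mulVec, Matrix.nonsing_inv_mul _ (hg.isUnit_det hy), Matrix.one_mulVec]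

theorem vecMul_inv_mulVec (hg : MetricOn g Ω) (hy : y ∈ Ω) (A : Fin 3 → ℝ) :
    ((g y)⁻¹ *ᵥ A) ᵥ* g y = A := by
  rw [← Matrix.mulVec_transpose, (hg.2.1 y hy).eq, Matrix.mulVec_mulVec,
    Matrix.mul_nonsing_inv _ (hg.isUnit_det hy), Matrix.one_mulVec]

theorem contDiffAt_apply (hg : MetricOn g Ω) (hΩ : IsOpen Ω) (hy : y ∈ Ω) (a b : Fin 3) :
    ContDiffAt ℝ ∞ (fun z => g z a b) y :=
  (hg.1 a b).contDiffAt (hΩ.mem_nhds hy)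

theorem contDiffAt_Gamma (hg : MetricOn g Ω) (hΩ : IsOpen Ω) (hy : y ∈ Ω) (p a b : Fin 3) :
    ContDiffAt ℝ ∞ (fun z => Gamma g z p a b) y := by
  have hinv := ContDiffAt.matrix_inv_apply (hg.contDiffAt_apply hΩ hy)
    (hg.isUnit_det hy).ne_zero
  have hpd c d e := (hg.contDiffAt_apply hΩ hy c d).pd e
  unfold Gamma
  exact contDiffAt_const.mul <| ContDiffAt.sum fun n _ =>
    (hinv p n).mul (((hpd n a b).add (hpd n b a)).sub (hpd a b n))

theorem pd_symm (hg : MetricOn g Ω) (hΩ : IsOpen Ω) (hy : y ∈ Ω) (a b c : Fin 3) :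
    pd (fun z => g z a b) c y = pd (fun z => g z b a) c y :=
  pd_congr (eventually_of_mem (hΩ.mem_nhds hy) fun _ hz => hg.symm_apply hz a b) c

theorem Gamma_symm (hg : MetricOn g Ω) (hΩ : IsOpen Ω) (hy : y ∈ Ω) (p a b : Fin 3) :
    Gamma g y p a b = Gamma g y p b a := by
  simp only [Gamma, hg.pd_symm hΩ hy b a, add_comm (pd (fun z => g z _ a) b y)]

theorem sum_Gamma_mul (hg : MetricOn g Ω) (hy : y ∈ Ω) (a b c : Fin 3) :
    ∑ h, Gamma g y h a b * g y h c
      = (pd (fun z => g z c a) b y + pd (fun z => g z c b) a y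
          - pd (fun z => g z a b) c y) / 2 := by
  set B : Fin 3 → ℝ := fun n =>
    pd (fun z => g z n a) b y + pd (fun z => g z n b) a y - pd (fun z => g z a b) n y
  have hGamma h : Gamma g y h a b = 1 / 2 * ((g y)⁻¹ *ᵥ B) h := rfl
  simp only [hGamma, mul_assoc, ← Finset.mul_sum]
  change 1 / 2 * ((((g y)⁻¹ *ᵥ B) ᵥ* g y) c) = B c / 2
  rw [hg.vecMul_inv_mulVec hy]
  ring

theorem pd_eq_sum_Gamma (hg : MetricOn g Ω) (hΩ : IsOpen Ω) (hy : y ∈ Ω) (d a b : Fin 3) :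
    pd (fun z => g z a b) d y
      = ∑ h, (Gamma g y h d a * g y h b + Gamma g y h d b * g y a h) := by
  have hswap : ∑ h, Gamma g y h d b * g y a h = ∑ h, Gamma g y h d b * g y h a :=
    Finset.sum_congr rfl fun h _ => by rw [hg.symm_apply hy a h]
  rw [Finset.sum_add_distrib, hswap, hg.sum_Gamma_mul hy, hg.sum_Gamma_mul hy,
    hg.pd_symm hΩ hy b d, hg.pd_symm hΩ hy b a, hg.pd_symm hΩ hy d a]
  ring

theorem Wup_eq (hg : MetricOn g Ω) (hΩ : IsOpen Ω) (hy : y ∈ Ω) (p i j : Fin 3) :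
    Wup L g y p i j = L y p i j - Gamma g y p i j := by
  set A : Fin 3 → ℝ := fun m => L y m i j
  set B : Fin 3 → ℝ := fun n =>
    pd (fun z => g z n i) j y + pd (fun z => g z n j) i y - pd (fun z => g z i j) n y
  have hlow : (fun k => (-Tlow L g y i k j + Tlow L g y k j i - Tlow L g y j i k)
      + 1 / 2 * (nm L g y i k j - nm L g y k j i + nm L g y j i k))
      = A ᵥ* g y - (1 / 2 : ℝ) • B := by
    funext k
    simp only [Tlow, nm, torsion, A, B, vecMul, dotProduct, Fin.sum_univ_three, Pi.sub_apply,
      Pi.smul_apply, smul_eq_mul, hg.pd_symm hΩ hy j i k, hg.pd_symm hΩ hy i k j,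
      hg.symm_apply hy i, hg.symm_apply hy j, hg.symm_apply hy k]
    ring
  calc Wup L g y p i j
      = ((g y)⁻¹ *ᵥ fun k => (-Tlow L g y i k j + Tlow L g y k j i - Tlow L g y j i k)
          + 1 / 2 * (nm L g y i k j - nm L g y k j i + nm L g y j i k)) p := by
        simp only [Wup, contortion, mten, mulVec, dotProduct, Finset.mul_sum,
          ← Finset.sum_add_distrib]
        exact Finset.sum_congr rfl fun k _ => by ring
    _ = L y p i j - Gamma g y p i j := by
        rw [hlow, mulVec_sub, mulVec_smul, hg.inv_mulVec_vecMul hy]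
        rfl

end MetricOn

/-- `covDeriv Γ W x i q j p` is `∇_i W^q_{jp}` at `x`, for the connection `Γ`. -/
def covDeriv (Γ W : Conn) (x : E3) (i q j p : Fin 3) : ℝ :=
  pd (fun y => W y q j p) i x
    + ∑ k, (Γ x q i k * W x k j p - Γ x k i j * W x q k p - Γ x k i p * W x q j k)

theorem curv_congr {L L' : Conn} {x : E3} (h : L =ᶠ[𝓝 x] L') : curv L x = curv L' x := by
  have hpd a b c d : pd (fun y => L y a b c) d x = pd (fun y => L' y a b c) d x :=
    pd_congr (h.mono fun y hy => by rw [hy]) d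
  ext
  simp only [curv, hpd, h.eq_of_nhds]

theorem curv_add {Γ W : Conn} {x : E3}
    (hΓ : ∀ a b c, DifferentiableAt ℝ (fun y => Γ y a b c) x)
    (hW : ∀ a b c, DifferentiableAt ℝ (fun y => W y a b c) x)
    (hsymm : ∀ a b c, Γ x a b c = Γ x a c b) (q i j p : Fin 3) :
    curv (Γ + W) x q i j p
      = curv Γ x q i j p + (covDeriv Γ W x i q j p - covDeriv Γ W x j q i p)
        + ∑ h, (W x h j p * W x q i h - W x h i p * W x q j h) := by
  simp only [curv, covDeriv, Pi.add_apply, pd_add (hΓ _ _ _) (hW _ _ _), Fin.sum_univ_three,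
    hsymm _ j i]
  ring

theorem hatD_eq_sum_mul_covDeriv {Ω : Set E3} {L : Conn} {g : Metric} (hg : MetricOn g Ω)
    (hΩ : IsOpen Ω) {x : E3} (hx : x ∈ Ω)
    (hW : ∀ a b c, DifferentiableAt ℝ (fun y => Wup L g y a b c) x) (i j p l : Fin 3) :
    hatD L g i j p l x = ∑ q, g x l q * covDeriv (LC g) (Wup L g) x i q j p := by
  have hgd a b := (hg.contDiffAt_apply hΩ hx a b).differentiableAt (by simp)
  have hWlow : pd (fun y => Wlow L g y j p l) i x
      = ∑ k, (pd (fun y => Wup L g y k j p) i x * g x k l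
          + Wup L g x k j p * pd (fun y => g y k l) i x) := by
    simp only [Wlow]
    rw [pd_sum (F := fun k y => Wup L g y k j p * g y k l) fun k _ => (hW k j p).mul (hgd k l)]
    simp only [pd_mul (hW _ j p) (hgd _ l)]
  rw [hatD, hWlow]
  simp only [hg.pd_eq_sum_Gamma hΩ hx, covDeriv, LC, Wlow, Fin.sum_univ_three,
    hg.symm_apply hx l]
  ring

theorem curvature_relative_to_levi_civita_general
    (Ω : Set E3) (hΩ : IsOpen Ω)
    (L : Conn) (hL : ConnSmooth L Ω) (g : Metric) (hg : MetricOn g Ω) :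
    ∀ x ∈ Ω, ∀ i j p l : Fin 3,
      lcurv L g x i j p l
        = lcurv (LC g) g x i j p l
          + (hatD L g i j p l x - hatD L g j i p l x)
          + ∑ m, (Wlow L g x i m l * Wup L g x m j p
                  - Wlow L g x j m l * Wup L g x m i p) := by
  intro x hx i j p l
  have hWup : ∀ᶠ y in 𝓝 x, Wup L g y = L y - LC g y :=
    eventually_of_mem (hΩ.mem_nhds hx) fun y hy => by
      ext; exact hg.Wup_eq hΩ hy _ _ _
  have hLC a b c : DifferentiableAt ℝ (fun y => LC g y a b c) x :=
    (hg.contDiffAt_Gamma hΩ hx a b c).differentiableAt (by simp)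
  have hW a b c : DifferentiableAt ℝ (fun y => Wup L g y a b c) x :=
    ((((hL a b c).contDiffAt (hΩ.mem_nhds hx)).differentiableAt (by simp)).sub (hLC a b c))
      |>.congr_of_eventuallyEq (hWup.mono fun y hy => by simp [hy])
  have hL_eq : L =ᶠ[𝓝 x] LC g + Wup L g := hWup.mono fun y hy => by simp [hy]
  simp only [lcurv, curv_congr hL_eq, curv_add hLC hW (hg.Gamma_symm hΩ hx),
    hatD_eq_sum_mul_covDeriv hg hΩ hx hW, Wlow, Fin.sum_univ_three, hg.symm_apply hx l]
  ring

/-- Curvature of a connection relative to the Levi-Civita curvature: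
`R_{ijpl} = K_{ijpl} + (∂̂_i W_{jpl} - ∂̂_j W_{ipl}) + (W_{iml} W_{jp}^m - W_{jml} W_{ip}^m)`. -/
theorem curvature_relative_to_levi_civita
    (Ω : Set E3) (hΩ : IsOpen Ω) (hne : Ω.Nonempty)
    (L : Conn) (hL : ConnSmooth L Ω) (g : Metric) (hg : MetricOn g Ω) :
    ∀ x ∈ Ω, ∀ i j p l : Fin 3,
      lcurv L g x i j p l
        = lcurv (LC g) g x i j p l
          + (hatD L g i j p l x - hatD L g j i p l x)
          + ∑ m, (Wlow L g x i m l * Wup L g x m j p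
                  - Wlow L g x j m l * Wup L g x m i p) :=
  curvature_relative_to_levi_civita_general Ω hΩ L hL g hg
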